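/- arXiv:1510.01123 — 3 statements merged into one kernel-verified Lean document; each statement's English description precedes it below -/
import Mathlib

section
/- There exists a constant C such that for any symmetric nonnegative 3×3 real matrices A and B with A invertible, ‖A^{1/2} - B^{1/2}‖ ≤ C ‖A^{-1}‖^{1/2} ‖A - B‖. -/
noncomputable section
open Matrix

abbrev M3 := Matrix (Fin 3) (Fin 3) ℝ

/-- Squared Frobenius (Hilbert–Schmidt) norm: `‖M‖² = Tr (M Mᵀ)`. -/
def frobSq (A : M3) : ℝ := Matrix.trace (A * Aᵀ)

/-- Frobenius norm. -/
def frobNorm (A : M3) : ℝ := Real.sqrt (frobSq A)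

/-- The square root of a positive semidefinite matrix (as in the older Mathlib). -/
def Matrix.PosSemidef.sqrt {n : Type*} {𝕜 : Type*} [Fintype n] [RCLike 𝕜] [PartialOrder 𝕜] [DecidableEq n]
    {A : Matrix n n 𝕜} (hA : A.PosSemidef) : Matrix n n 𝕜 :=
  hA.1.eigenvectorUnitary.1 * diagonal ((↑) ∘ (Real.sqrt ∘ hA.1.eigenvalues)) *
    (star hA.1.eigenvectorUnitary : Matrix n n 𝕜)

/-! With `X = √A`, `Y = √B` and `D = X - Y` one has `A - B = X D + D Y`, hence
`tr (D (A - B)) = tr (D X D) + tr (D Y D) ≥ λ_min(X) ‖D‖²`, while Cauchy–Schwarz bounds the left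
side by `‖D‖ ‖A - B‖`. Moreover `λ_min(X)² = λ_min(A) ≥ ‖A⁻¹‖⁻¹`, because the Frobenius norm
dominates every eigenvalue of `A⁻¹`. So the claim holds with `C = 1`. -/

namespace Matrix

variable {n : Type*}

lemma PosSemidef.isSymm {A : Matrix n n ℝ} (hA : A.PosSemidef) : A.IsSymm :=
  isHermitian_iff_isSymm.mp hA.1

variable [Fintype n]

lemma PosSemidef.dotProduct_mulVec_self_nonneg {A : Matrix n n ℝ} (hA : A.PosSemidef)
    (v : n → ℝ) : 0 ≤ v ⬝ᵥ A *ᵥ v := by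
  simpa using hA.dotProduct_mulVec_nonneg v

lemma PosSemidef.dotProduct_mulVec_comm {A : Matrix n n ℝ} (hA : A.PosSemidef) (u w : n → ℝ) :
    u ⬝ᵥ A *ᵥ w = w ⬝ᵥ A *ᵥ u := by
  rw [dotProduct_mulVec, ← mulVec_transpose, hA.isSymm.eq, dotProduct_comm]

variable [DecidableEq n]

namespace PosSemidef

variable {A : Matrix n n ℝ}

lemma sq_dotProduct_mulVec_le (hA : A.PosSemidef) (u w : n → ℝ) :
    (u ⬝ᵥ A *ᵥ w) ^ 2 ≤ (u ⬝ᵥ A *ᵥ u) * (w ⬝ᵥ A *ᵥ w) := by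
  have h := (toBilin' A).apply_mul_apply_le_of_forall_zero_le
    (fun v => by simpa only [toBilin'_apply'] using hA.dotProduct_mulVec_self_nonneg v) u w
  simpa only [toBilin'_apply', hA.dotProduct_mulVec_comm w u, ← sq] using h

lemma sq_dotProduct_self_le_mul_inv (hA : A.PosSemidef) (hd : IsUnit A.det) (v : n → ℝ) :
    (v ⬝ᵥ v) ^ 2 ≤ (v ⬝ᵥ A *ᵥ v) * (v ⬝ᵥ A⁻¹ *ᵥ v) := by
  have hAv : A *ᵥ (A⁻¹ *ᵥ v) = v := by rw [mulVec_mulVec, mul_nonsing_inv A hd, one_mulVec]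
  simpa only [hAv, dotProduct_comm (A⁻¹ *ᵥ v) v] using hA.sq_dotProduct_mulVec_le v (A⁻¹ *ᵥ v)

lemma posSemidef_sqrt (hA : A.PosSemidef) : hA.sqrt.PosSemidef := by
  have hD : (diagonal ((↑) ∘ (Real.sqrt ∘ hA.1.eigenvalues)) : Matrix n n ℝ).PosSemidef :=
    PosSemidef.diagonal fun i => by simp [Real.sqrt_nonneg]
  simpa [sqrt, star_eq_conjTranspose, Function.comp_def] using
    hD.mul_mul_conjTranspose_same (hA.1.eigenvectorUnitary : Matrix n n ℝ)

lemma sqrt_mul_self (hA : A.PosSemidef) : hA.sqrt * hA.sqrt = A := by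
  have hU : (star hA.1.eigenvectorUnitary : Matrix n n ℝ) * hA.1.eigenvectorUnitary = 1 := by simp
  conv_rhs => rw [hA.1.spectral_theorem, Unitary.conjStarAlgAut_apply]
  simp only [sqrt, Matrix.mul_assoc]
  rw [← Matrix.mul_assoc (star hA.1.eigenvectorUnitary : Matrix n n ℝ), hU, Matrix.one_mul,
    ← Matrix.mul_assoc (diagonal _), diagonal_mul_diagonal]
  congr 3
  funext i
  simp [Real.mul_self_sqrt (hA.eigenvalues_nonneg i)]

lemma isUnit_det_sqrt (hA : A.PosSemidef) (hd : IsUnit A.det) : IsUnit hA.sqrt.det :=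
  isUnit_of_mul_isUnit_left (by rwa [← det_mul, hA.sqrt_mul_self])

/-- Cauchy–Schwarz twice: `|v|⁴ ≤ ⟪v, X v⟫ ⟪v, X⁻¹ v⟫` and `⟪v, X⁻¹ v⟫² ≤ |v|² |X⁻¹ v|²`, where
`|X⁻¹ v|² = ⟪v, A⁻¹ v⟫`. -/
lemma dotProduct_self_le_sqrt_mul_dotProduct_sqrt_mulVec (hA : A.PosSemidef)
    (hd : IsUnit A.det) {k : ℝ} (hAinv : ∀ v, v ⬝ᵥ A⁻¹ *ᵥ v ≤ k * (v ⬝ᵥ v)) (v : n → ℝ) :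
    v ⬝ᵥ v ≤ √k * (v ⬝ᵥ hA.sqrt *ᵥ v) := by
  set X := hA.sqrt
  have hX : X.PosSemidef := hA.posSemidef_sqrt
  have hv : 0 ≤ v ⬝ᵥ v := by simpa using dotProduct_star_self_nonneg v
  have hXv : 0 ≤ v ⬝ᵥ X *ᵥ v := hX.dotProduct_mulVec_self_nonneg v
  have hXinv_sq : (X⁻¹ *ᵥ v) ⬝ᵥ (X⁻¹ *ᵥ v) = v ⬝ᵥ A⁻¹ *ᵥ v := by
    rw [← hX.inv.dotProduct_mulVec_comm, mulVec_mulVec, ← mul_inv_rev, hA.sqrt_mul_self]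
  have hXinv : v ⬝ᵥ X⁻¹ *ᵥ v ≤ √k * (v ⬝ᵥ v) := by
    have hcs := PosSemidef.one.sq_dotProduct_mulVec_le v (X⁻¹ *ᵥ v)
    simp only [one_mulVec, hXinv_sq] at hcs
    calc v ⬝ᵥ X⁻¹ *ᵥ v ≤ √(k * (v ⬝ᵥ v) ^ 2) :=
          (le_abs_self _).trans <| Real.abs_le_sqrt <| hcs.trans <| by
            nlinarith [hAinv v]
      _ = √k * (v ⬝ᵥ v) := by rw [Real.sqrt_mul' _ (sq_nonneg _), Real.sqrt_sq hv]
  have hcs := hX.sq_dotProduct_self_le_mul_inv (hA.isUnit_det_sqrt hd) v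
  rcases hv.eq_or_lt with h0 | hpos
  · rw [← h0]; positivity
  · nlinarith

lemma posSemidef_sqrt_sub_smul_one (hA : A.PosSemidef) (hd : IsUnit A.det) {k : ℝ} (hk : 0 < k)
    (hAinv : ∀ v, v ⬝ᵥ A⁻¹ *ᵥ v ≤ k * (v ⬝ᵥ v)) : (hA.sqrt - (√k)⁻¹ • 1).PosSemidef := by
  refine of_dotProduct_mulVec_nonneg ?_ fun v => ?_
  · rw [isHermitian_iff_isSymm]
    exact hA.posSemidef_sqrt.isSymm.sub (isSymm_one.smul _)
  · simp only [star_trivial, sub_mulVec, dotProduct_sub, smul_mulVec, one_mulVec, dotProduct_smul,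
      smul_eq_mul]
    rw [sub_nonneg, inv_mul_le_iff₀ (Real.sqrt_pos.2 hk)]
    exact hA.dotProduct_self_le_sqrt_mul_dotProduct_sqrt_mulVec hd hAinv v

end PosSemidef

lemma mul_trace_sub_mul_transpose_le {X Y : Matrix n n ℝ} {c : ℝ}
    (hX : (X - c • 1).PosSemidef) (hY : Y.PosSemidef) :
    c * trace ((X - Y) * (X - Y)ᵀ) ≤ trace ((X - Y)ᵀ * (X * X - Y * Y)) := by
  set D := X - Y
  have hD : Dᵀ = D := by
    have hXsymm : X.IsSymm := by simpa using hX.isSymm.add (isSymm_one.smul c)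
    exact (hXsymm.sub hY.isSymm).eq
  have hDXD := (hX.conjTranspose_mul_mul_same D).trace_nonneg
  have hDYD := (hY.conjTranspose_mul_mul_same D).trace_nonneg
  rw [conjTranspose_eq_transpose_of_trivial, hD] at hDXD hDYD
  rw [hD]
  have key : trace (D * (X * X - Y * Y)) =
      trace (D * (X - c • 1) * D) + trace (D * Y * D) + c * trace (D * D) := by
    rw [show X * X - Y * Y = X * D + D * Y by simp only [D]; noncomm_ring, trace_mul_cycle D Y D]
    simp only [Matrix.mul_sub, Matrix.sub_mul, Matrix.mul_add, Matrix.mul_smul, Matrix.smul_mul,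
      Matrix.mul_one, trace_add, trace_sub, trace_smul, smul_eq_mul, Matrix.mul_assoc]
    ring
  linarith

end Matrix

lemma frobSq_eq_sum (M : M3) : frobSq M = ∑ i, ∑ j, M i j ^ 2 := by
  simp [frobSq, trace, mul_apply, sq]

lemma frobSq_nonneg (M : M3) : 0 ≤ frobSq M := by
  simpa [frobSq] using (posSemidef_self_mul_conjTranspose M).trace_nonneg

lemma frobNorm_nonneg (M : M3) : 0 ≤ frobNorm M :=
  Real.sqrt_nonneg _

lemma frobNorm_mul_self (M : M3) : frobNorm M * frobNorm M = trace (M * Mᵀ) :=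
  Real.mul_self_sqrt (frobSq_nonneg M)

lemma frobNorm_pos {M : M3} (hM : M ≠ 0) : 0 < frobNorm M := by
  refine Real.sqrt_pos.2 <| (frobSq_nonneg M).lt_of_ne fun h => hM ?_
  simpa using trace_mul_conjTranspose_self_eq_zero_iff.1 h.symm

lemma sum_mul_le_frobNorm_mul (N M : M3) :
    ∑ i, ∑ j, N i j * M i j ≤ frobNorm N * frobNorm M := by
  simpa only [frobNorm, frobSq_eq_sum, Fintype.sum_prod_type] using
    Real.sum_mul_le_sqrt_mul_sqrt Finset.univ (fun p : Fin 3 × Fin 3 => N p.1 p.2)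
      (fun p => M p.1 p.2)

lemma trace_transpose_mul_le (N M : M3) : trace (Nᵀ * M) ≤ frobNorm N * frobNorm M := by
  have h : trace (Nᵀ * M) = ∑ i, ∑ j, N i j * M i j := by
    simp only [trace, diag, mul_apply, transpose_apply]
    exact Finset.sum_comm
  exact h ▸ sum_mul_le_frobNorm_mul N M

lemma dotProduct_mulVec_le_frobNorm_mul (M : M3) (v : Fin 3 → ℝ) :
    v ⬝ᵥ M *ᵥ v ≤ frobNorm M * (v ⬝ᵥ v) := by
  have hv : frobNorm (vecMulVec v v) = v ⬝ᵥ v := by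
    have hsq : ∑ i, ∑ j, vecMulVec v v i j ^ 2 = (v ⬝ᵥ v) ^ 2 := by
      simp only [vecMulVec_apply, dotProduct, sq, Finset.sum_mul_sum]
      exact Finset.sum_congr rfl fun i _ => Finset.sum_congr rfl fun j _ => by ring
    rw [frobNorm, frobSq_eq_sum, hsq, Real.sqrt_sq (by simpa using dotProduct_star_self_nonneg v)]
  have h : v ⬝ᵥ M *ᵥ v = ∑ i, ∑ j, vecMulVec v v i j * M i j := by
    simp only [dotProduct, mulVec, vecMulVec_apply, Finset.mul_sum]
    exact Finset.sum_congr rfl fun i _ => Finset.sum_congr rfl fun j _ => by ring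
  rw [h, mul_comm, ← hv]
  exact sum_mul_le_frobNorm_mul _ M

lemma frobNorm_sub_le_of_posSemidef_sub_smul_one {X Y : M3} {c : ℝ} (hc : 0 < c)
    (hX : (X - c • 1).PosSemidef) (hY : Y.PosSemidef) :
    frobNorm (X - Y) ≤ c⁻¹ * frobNorm (X * X - Y * Y) := by
  have h := (mul_trace_sub_mul_transpose_le hX hY).trans (trace_transpose_mul_le _ _)
  rw [← frobNorm_mul_self] at h
  rw [le_inv_mul_iff₀ hc]
  rcases (frobNorm_nonneg (X - Y)).eq_or_lt with h0 | hpos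
  · rw [← h0, mul_zero]
    exact frobNorm_nonneg _
  · exact le_of_mul_le_mul_right (by linarith) hpos

theorem sqrt_matrix_lipschitz :
    ∃ C : ℝ, 0 < C ∧ ∀ (A B : M3) (hA : A.PosSemidef) (hB : B.PosSemidef),
      IsUnit A.det →
      frobNorm (hA.sqrt - hB.sqrt) ≤ C * Real.sqrt (frobNorm A⁻¹) * frobNorm (A - B) := by
  refine ⟨1, one_pos, fun A B hA hB hd => ?_⟩
  have hk : 0 < frobNorm A⁻¹ :=
    frobNorm_pos (isUnit_nonsing_inv_iff.2 ((isUnit_iff_isUnit_det A).2 hd)).ne_zero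
  have h := frobNorm_sub_le_of_posSemidef_sub_smul_one (inv_pos.2 (Real.sqrt_pos.2 hk))
    (hA.posSemidef_sqrt_sub_smul_one hd hk (dotProduct_mulVec_le_frobNorm_mul A⁻¹))
    hB.posSemidef_sqrt
  rwa [hA.sqrt_mul_self, hB.sqrt_mul_self, inv_inv, ← one_mul √(frobNorm A⁻¹)] at h
end
end

section
/- For γ ∈ [0,1] there is a constant C depending only on γ such that for all v, w ∈ ℝ³: |b(v)-b(w)| ≤ C|v-w|(|v|^γ + |w|^γ), ‖σ(v)-σ(w)‖ ≤ C|v-w|(|v|^{γ/2} + |w|^{γ/2}), and ‖a(v)-a(w)‖ ≤ C|v-w|(|v|^{1+γ} + |w|^{1+γ}). -/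
/-!
Each coefficient has the form `‖v‖ ^ (1 + β) • Φ v`, with `Φ v = v / ‖v‖` for `b` and
`Φ v = Π_{v⊥}` for `σ` and `a`. Such a `Φ` is bounded, and for `‖w‖ ≤ ‖v‖` it varies by
`O(‖v - w‖ / ‖v‖)`. Splitting
`‖v‖^(1+β) Φ v - ‖w‖^(1+β) Φ w = (‖v‖^(1+β) - ‖w‖^(1+β)) Φ v + ‖w‖^(1+β) (Φ v - Φ w)`,
the radial part is controlled by Bernoulli's inequality and the angular part by
`‖w‖^(1+β) / ‖v‖ ≤ ‖w‖^β`.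
-/

noncomputable section
open Matrix
open scoped Classical

abbrev E3 := EuclideanSpace ℝ (Fin 3)

def proj3 (v : E3) : M3 :=
  1 - (‖v‖ ^ 2)⁻¹ • Matrix.vecMulVec (fun i => v i) (fun i => v i)

def amat (γ : ℝ) (v : E3) : M3 := if v = 0 then 0 else (‖v‖ ^ (2 + γ)) • proj3 v

def sigmat (γ : ℝ) (v : E3) : M3 := if v = 0 then 0 else (‖v‖ ^ (1 + γ / 2)) • proj3 v

def bvec (γ : ℝ) (v : E3) : E3 := (-2 * ‖v‖ ^ γ) • v

theorem Real.rpow_sub_rpow_le_of_one_le {p x y : ℝ} (hp : 1 ≤ p) (hy : 0 ≤ y) (hyx : y ≤ x) :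
    x ^ p - y ^ p ≤ p * x ^ (p - 1) * (x - y) := by
  rcases (hy.trans hyx).eq_or_lt' with rfl | hx
  · simp [le_antisymm hyx hy]
  have bernoulli := one_add_mul_self_le_rpow_one_add (s := y / x - 1)
    (by linarith [div_nonneg hy hx.le]) hp
  rw [add_sub_cancel, Real.div_rpow hy hx.le, le_div_iff₀ (by positivity)] at bernoulli
  have hxp : x ^ p = x ^ (p - 1) * x := by
    rw [← Real.rpow_add_one hx.ne']; ring_nf
  have : (1 + p * (y / x - 1)) * x ^ p = x ^ p - p * x ^ (p - 1) * (x - y) := by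
    rw [hxp]; field_simp; ring
  linarith

section NormedSpace

variable {E F : Type*} [SeminormedAddCommGroup E] [SeminormedAddCommGroup F] [NormedSpace ℝ F]

theorem norm_rpow_smul_sub_rpow_smul_le {Φ : E → F} {β K L : ℝ} (hβ : 0 ≤ β)
    (hΦ : ∀ v, ‖Φ v‖ ≤ K) (hΦ_sub : ∀ v w, ‖w‖ ≤ ‖v‖ → ‖v‖ * ‖Φ v - Φ w‖ ≤ L * ‖v - w‖)
    (v w : E) :
    ‖‖v‖ ^ (1 + β) • Φ v - ‖w‖ ^ (1 + β) • Φ w‖ ≤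
      ((1 + β) * K + L) * ‖v - w‖ * (‖v‖ ^ β + ‖w‖ ^ β) := by
  wlog hwv : ‖w‖ ≤ ‖v‖ generalizing v w
  · rw [norm_sub_rev, norm_sub_rev v, add_comm (‖v‖ ^ β)]
    exact this w v (le_of_not_ge hwv)
  have hK : 0 ≤ K := (norm_nonneg _).trans (hΦ v)
  have hLd : 0 ≤ L * ‖v - w‖ :=
    (mul_nonneg (norm_nonneg _) (norm_nonneg _)).trans (hΦ_sub v w hwv)
  have hy := norm_nonneg w
  have hxβ : 0 ≤ ‖v‖ ^ β := Real.rpow_nonneg (norm_nonneg v) β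
  have hyβ : 0 ≤ ‖w‖ ^ β := Real.rpow_nonneg hy β
  have hsplit : ‖v‖ ^ (1 + β) • Φ v - ‖w‖ ^ (1 + β) • Φ w =
      (‖v‖ ^ (1 + β) - ‖w‖ ^ (1 + β)) • Φ v + ‖w‖ ^ (1 + β) • (Φ v - Φ w) := by
    module
  have hradial :
      ‖(‖v‖ ^ (1 + β) - ‖w‖ ^ (1 + β)) • Φ v‖ ≤ (1 + β) * K * ‖v - w‖ * ‖v‖ ^ β := by
    have hmono : ‖w‖ ^ (1 + β) ≤ ‖v‖ ^ (1 + β) := by gcongr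
    have hdiff := Real.rpow_sub_rpow_le_of_one_le (p := 1 + β) (by linarith) hy hwv
    rw [add_sub_cancel_left] at hdiff
    rw [norm_smul, Real.norm_of_nonneg (sub_nonneg.2 hmono)]
    calc (‖v‖ ^ (1 + β) - ‖w‖ ^ (1 + β)) * ‖Φ v‖
        ≤ ((1 + β) * ‖v‖ ^ β * ‖v - w‖) * K := by
          gcongr
          · exact hdiff.trans (by gcongr; exact norm_sub_norm_le v w)
          · exact hΦ v
      _ = (1 + β) * K * ‖v - w‖ * ‖v‖ ^ β := by ring
  have hangular : ‖‖w‖ ^ (1 + β) • (Φ v - Φ w)‖ ≤ L * ‖v - w‖ * ‖w‖ ^ β := by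
    rw [norm_smul, Real.norm_of_nonneg (by positivity), Real.rpow_one_add' hy (by linarith)]
    calc ‖w‖ * ‖w‖ ^ β * ‖Φ v - Φ w‖ ≤ ‖w‖ ^ β * (‖v‖ * ‖Φ v - Φ w‖) := by
          rw [mul_comm ‖w‖, mul_assoc]; gcongr
      _ ≤ ‖w‖ ^ β * (L * ‖v - w‖) := mul_le_mul_of_nonneg_left (hΦ_sub v w hwv) hyβ
      _ = L * ‖v - w‖ * ‖w‖ ^ β := by ring
  rw [hsplit]
  refine (norm_add_le _ _).trans ((add_le_add hradial hangular).trans ?_)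
  have hKd : 0 ≤ (1 + β) * K * ‖v - w‖ := by positivity
  linarith [mul_nonneg hKd hyβ, mul_nonneg hLd hxβ]

variable [NormedSpace ℝ E]

theorem norm_inv_norm_smul_le_one (v : E) : ‖‖v‖⁻¹ • v‖ ≤ 1 := by
  rw [norm_smul, norm_inv, norm_norm]
  exact inv_mul_le_one

theorem norm_mul_norm_inv_norm_smul_sub_le {v w : E} (hwv : ‖w‖ ≤ ‖v‖) :
    ‖v‖ * ‖‖v‖⁻¹ • v - ‖w‖⁻¹ • w‖ ≤ 2 * ‖v - w‖ := by
  rcases (norm_nonneg w).eq_or_lt' with hw | hw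
  · have hv : ‖v‖ ≤ ‖v - w‖ := by simpa [hw] using norm_sub_norm_le v w
    rw [hw, _root_.inv_zero, zero_smul, sub_zero]
    calc ‖v‖ * ‖‖v‖⁻¹ • v‖ ≤ ‖v - w‖ * 1 := by gcongr; exact norm_inv_norm_smul_le_one v
      _ ≤ 2 * ‖v - w‖ := by linarith [norm_nonneg (v - w)]
  have hv : 0 < ‖v‖ := hw.trans_le hwv
  have hsplit : ‖v‖⁻¹ • v - ‖w‖⁻¹ • w = ‖v‖⁻¹ • (v - w) + (‖v‖⁻¹ - ‖w‖⁻¹) • w := by module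
  have hscalar : |‖v‖⁻¹ - ‖w‖⁻¹| * ‖w‖ = (‖v‖ - ‖w‖) / ‖v‖ := by
    rw [abs_of_nonpos (sub_nonpos.2 (inv_anti₀ hw hwv))]
    field_simp; ring
  calc ‖v‖ * ‖‖v‖⁻¹ • v - ‖w‖⁻¹ • w‖
      ≤ ‖v‖ * (‖v‖⁻¹ * ‖v - w‖ + |‖v‖⁻¹ - ‖w‖⁻¹| * ‖w‖) := by
        rw [hsplit]
        gcongr
        refine (norm_add_le _ _).trans_eq ?_
        rw [norm_smul, norm_smul, norm_inv, norm_norm, Real.norm_eq_abs]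
    _ = ‖v - w‖ + (‖v‖ - ‖w‖) := by rw [hscalar]; field_simp
    _ ≤ 2 * ‖v - w‖ := by linarith [norm_sub_norm_le v w]

end NormedSpace

attribute [local instance] Matrix.frobeniusNormedAddCommGroup Matrix.frobeniusNormedSpace

theorem frobNorm_eq_norm (A : M3) : frobNorm A = ‖A‖ := by
  rw [frobNorm, frobSq, frobenius_norm_def, Real.sqrt_eq_rpow]
  simp [Matrix.trace, Matrix.mul_apply, sq]

theorem Matrix.frobenius_norm_vecMulVec_le {m n : Type*} [Fintype m] [Fintype n]
    (a : EuclideanSpace ℝ m) (b : EuclideanSpace ℝ n) :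
    ‖vecMulVec (fun i => a i) (fun j => b j)‖ ≤ ‖a‖ * ‖b‖ := by
  rw [vecMulVec_eq Unit]
  exact (frobenius_norm_mul _ _).trans_eq (by simp)

theorem Matrix.frobenius_norm_vecMulVec_self_sub_le {n : Type*} [Fintype n]
    (a b : EuclideanSpace ℝ n) :
    ‖vecMulVec (fun i => a i) (fun i => a i) - vecMulVec (fun i => b i) (fun i => b i)‖ ≤
      ‖a - b‖ * (‖a‖ + ‖b‖) := by
  have hsplit :
      vecMulVec (fun i => a i) (fun i => a i) - vecMulVec (fun i => b i) (fun i => b i) =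
        vecMulVec (fun i => (a - b) i) (fun i => a i) +
          vecMulVec (fun i => b i) (fun i => (a - b) i) := by
    ext i j; simp [vecMulVec_apply]; ring
  rw [hsplit]
  calc _ ≤ _ := norm_add_le _ _
    _ ≤ ‖a - b‖ * ‖a‖ + ‖b‖ * ‖a - b‖ :=
        add_le_add (frobenius_norm_vecMulVec_le _ _) (frobenius_norm_vecMulVec_le _ _)
    _ = ‖a - b‖ * (‖a‖ + ‖b‖) := by ring

theorem proj3_eq_one_sub_vecMulVec (v : E3) :
    proj3 v = 1 - vecMulVec (fun i => (‖v‖⁻¹ • v) i) (fun i => (‖v‖⁻¹ • v) i) := by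
  ext i j; simp [proj3, vecMulVec_apply]; ring

theorem norm_proj3_le (v : E3) : ‖proj3 v‖ ≤ 3 := by
  have hone : ‖(1 : M3)‖ ≤ 2 := by
    rw [← coe_nnnorm, frobenius_nnnorm_one]
    simp [Real.sqrt_le_left zero_le_two]
    norm_num
  have hu := norm_inv_norm_smul_le_one v
  rw [proj3_eq_one_sub_vecMulVec]
  calc _ ≤ ‖(1 : M3)‖ + ‖‖v‖⁻¹ • v‖ * ‖‖v‖⁻¹ • v‖ :=
        (norm_sub_le _ _).trans (by gcongr; exact frobenius_norm_vecMulVec_le _ _)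
    _ ≤ 2 + 1 * 1 := by gcongr
    _ = 3 := by norm_num

theorem norm_mul_norm_proj3_sub_le {v w : E3} (hwv : ‖w‖ ≤ ‖v‖) :
    ‖v‖ * ‖proj3 v - proj3 w‖ ≤ 4 * ‖v - w‖ := by
  have hv := norm_inv_norm_smul_le_one v
  have hw := norm_inv_norm_smul_le_one w
  have hsub := norm_mul_norm_inv_norm_smul_sub_le hwv
  rw [proj3_eq_one_sub_vecMulVec, proj3_eq_one_sub_vecMulVec, sub_sub_sub_cancel_left,
    norm_sub_rev]
  calc ‖v‖ * ‖vecMulVec (fun i => (‖v‖⁻¹ • v) i) (fun i => (‖v‖⁻¹ • v) i)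
        - vecMulVec (fun i => (‖w‖⁻¹ • w) i) (fun i => (‖w‖⁻¹ • w) i)‖
      ≤ ‖v‖ * (‖‖v‖⁻¹ • v - ‖w‖⁻¹ • w‖ * 2) := by
        gcongr
        exact (frobenius_norm_vecMulVec_self_sub_le _ _).trans (by gcongr; linarith)
    _ ≤ 4 * ‖v - w‖ := by linarith

theorem bvec_eq_smul (γ : ℝ) (v : E3) :
    bvec γ v = (-2 : ℝ) • (‖v‖ ^ (1 + γ) • (‖v‖⁻¹ • v)) := by
  rcases eq_or_ne v 0 with rfl | hv
  · simp [bvec]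
  rw [bvec, smul_smul, smul_smul, Real.rpow_add (norm_pos_iff.2 hv), Real.rpow_one]
  field_simp

theorem sigmat_eq_smul_proj3 {γ : ℝ} (hγ : 1 + γ / 2 ≠ 0) (v : E3) :
    sigmat γ v = ‖v‖ ^ (1 + γ / 2) • proj3 v := by
  rcases eq_or_ne v 0 with rfl | hv
  · simp [sigmat, Real.zero_rpow hγ]
  · rw [sigmat, if_neg hv]

theorem amat_eq_smul_proj3 {γ : ℝ} (hγ : 2 + γ ≠ 0) (v : E3) :
    amat γ v = ‖v‖ ^ (2 + γ) • proj3 v := by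
  rcases eq_or_ne v 0 with rfl | hv
  · simp [amat, Real.zero_rpow hγ]
  · rw [amat, if_neg hv]

theorem coefficients_locally_lipschitz (γ : ℝ) (hγ : γ ∈ Set.Icc (0:ℝ) 1) :
    ∃ C : ℝ, 0 < C ∧ ∀ v w : E3,
      ‖bvec γ v - bvec γ w‖ ≤ C * ‖v - w‖ * (‖v‖ ^ γ + ‖w‖ ^ γ) ∧
      frobNorm (sigmat γ v - sigmat γ w) ≤ C * ‖v - w‖ * (‖v‖ ^ (γ / 2) + ‖w‖ ^ (γ / 2)) ∧
      frobNorm (amat γ v - amat γ w) ≤ C * ‖v - w‖ * (‖v‖ ^ (1 + γ) + ‖w‖ ^ (1 + γ)) := by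
  obtain ⟨hγ0, hγ1⟩ := hγ
  have hb := norm_rpow_smul_sub_rpow_smul_le (E := E3) (β := γ) hγ0 norm_inv_norm_smul_le_one
    fun _ _ => norm_mul_norm_inv_norm_smul_sub_le
  have hσ := norm_rpow_smul_sub_rpow_smul_le (β := γ / 2) (by positivity) norm_proj3_le
    fun _ _ => norm_mul_norm_proj3_sub_le
  have ha := norm_rpow_smul_sub_rpow_smul_le (β := 1 + γ) (by positivity) norm_proj3_le
    fun _ _ => norm_mul_norm_proj3_sub_le
  refine ⟨13, by norm_num, fun v w => ⟨?_, ?_, ?_⟩⟩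
  · have h2 : ‖(-2 : ℝ)‖ = 2 := by norm_num
    rw [bvec_eq_smul, bvec_eq_smul, ← smul_sub, norm_smul, h2]
    calc _ ≤ 2 * (((1 + γ) * 1 + 2) * ‖v - w‖ * (‖v‖ ^ γ + ‖w‖ ^ γ)) := by
          gcongr; exact hb v w
      _ ≤ 13 * ‖v - w‖ * (‖v‖ ^ γ + ‖w‖ ^ γ) := by
          rw [← mul_assoc, ← mul_assoc]; gcongr; linarith
  · rw [frobNorm_eq_norm, sigmat_eq_smul_proj3 (by positivity),
      sigmat_eq_smul_proj3 (by positivity)]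
    exact (hσ v w).trans (by gcongr; linarith)
  · rw [frobNorm_eq_norm, amat_eq_smul_proj3 (by positivity), amat_eq_smul_proj3 (by positivity),
      show (2 : ℝ) + γ = 1 + (1 + γ) by ring]
    exact (ha v w).trans (by gcongr; linarith)
end
end

section
/- For γ ∈ [0,1] and a probability measure f on ℝ³ with finite (2+γ)-th moment, setting b(f,v) = ∫ b(v-w) f(dw) and a(f,v) = ∫ a(v-w) f(dw), there is a constant C depending only on γ such that for all v, w ∈ ℝ³: (i) |b(f,v)| ≤ C(|v|^{1+γ} + m_{1+γ}(f)); (ii) |b(f,v)-b(f,w)| ≤ C|v-w|(|v|^γ + |w|^γ + m_γ(f)); (iii) ‖a(f,v)‖ ≤ C(|v|^{2+γ} + m_{2+γ}(f)); (iv) ‖a(f,v)-a(f,w)‖ ≤ C|v-w|(|v|^{1+γ} + |w|^{1+γ} + m_{1+γ}(f)). -/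
noncomputable section
open Matrix MeasureTheory
open scoped Classical

/-- `b(f,v) = ∫ b(v-w) f(dw)`. -/
def bInt (γ : ℝ) (f : Measure E3) (v : E3) : E3 := ∫ w, bvec γ (v - w) ∂f

/-- `a(f,v) = ∫ a(v-w) f(dw)` (entrywise integral). -/
def aInt (γ : ℝ) (f : Measure E3) (v : E3) : M3 :=
  Matrix.of fun i j => ∫ w, amat γ (v - w) i j ∂f

/-- `m_q(f) = ∫ |v|^q f(dv)`. -/
def mom (q : ℝ) (f : Measure E3) : ℝ := ∫ v, ‖v‖ ^ q ∂f

/-!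
Both kernels have the form `K(z) = ‖z‖^γ H(z)` with `H` homogeneous of degree one
(`H(z) = -2z`) or two (`H(z) = ‖z‖² I - z ⊗ z`). Growth bounds `|K(z)| ≲ ‖z‖^q` are immediate,
and for `‖z'‖ ≤ ‖z‖` the splitting
`K(z) - K(z') = ‖z‖^γ (H(z) - H(z')) + (‖z‖^γ - ‖z'‖^γ) H(z')`
together with `(t^γ - s^γ) s ≤ (t - s) s^γ` for `0 ≤ s ≤ t`, `γ ≤ 1`, gives the Lipschitz-type
bound `|K(z) - K(z')| ≲ ‖z - z'‖ (‖z‖^(q-1) + ‖z'‖^(q-1))`. Integrating against `f` with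
`‖v - u‖^p ≤ 2^p (‖v‖^p + ‖u‖^p)` turns these into the moment bounds; the Frobenius norm is
controlled entrywise.
-/

section Scalar

variable {γ : ℝ}

lemma rpow_sub_rpow_mul_le (hγ : γ ≤ 1) {s t : ℝ} (hs : 0 ≤ s) (hst : s ≤ t) :
    (t ^ γ - s ^ γ) * s ≤ (t - s) * s ^ γ := by
  suffices t ^ γ * s ≤ t * s ^ γ by linear_combination this
  rcases hs.eq_or_lt with rfl | hs
  · simpa using mul_nonneg hst (Real.rpow_nonneg le_rfl γ)
  have ht := hs.trans_le hst
  calc t ^ γ * s = t ^ γ * s ^ γ * s ^ (1 - γ) := by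
        rw [mul_assoc, ← Real.rpow_add hs]; norm_num
    _ ≤ t ^ γ * s ^ γ * t ^ (1 - γ) := by
        gcongr
    _ = t * s ^ γ := by
        rw [mul_right_comm, ← Real.rpow_add ht]; norm_num

lemma rpow_le_two_rpow_mul_add {q a b c : ℝ} (hq : 0 ≤ q) (ha : 0 ≤ a) (hb : 0 ≤ b)
    (hc : 0 ≤ c) (habc : a ≤ b + c) : a ^ q ≤ 2 ^ q * (b ^ q + c ^ q) := by
  wlog hcb : c ≤ b generalizing b c
  · simpa only [add_comm] using this hc hb (by linarith) (by linarith)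
  calc a ^ q ≤ (2 * b) ^ q := by gcongr; linarith
    _ = 2 ^ q * b ^ q := Real.mul_rpow zero_le_two hb
    _ ≤ 2 ^ q * (b ^ q + c ^ q) := by gcongr; simpa using Real.rpow_nonneg hc q

lemma norm_sub_rpow_le {E : Type*} [SeminormedAddCommGroup E] {q : ℝ} (hq : 0 ≤ q) (v w : E) :
    ‖v - w‖ ^ q ≤ 2 ^ q * (‖v‖ ^ q + ‖w‖ ^ q) :=
  rpow_le_two_rpow_mul_add hq (norm_nonneg _) (norm_nonneg _) (norm_nonneg _) (norm_sub_le v w)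

lemma norm_rpow_smul_sub_rpow_smul_le_s4 {F : Type*} [SeminormedAddCommGroup F] [NormedSpace ℝ F]
    (hγ0 : 0 ≤ γ) (hγ1 : γ ≤ 1) {x y M : ℝ} (hy : 0 ≤ y) (hyx : y ≤ x) (hM : 0 ≤ M)
    (h h' : F) (hh' : ‖h'‖ ≤ M * y) :
    ‖x ^ γ • h - y ^ γ • h'‖ ≤ x ^ γ * ‖h - h'‖ + M * (x - y) * y ^ γ := by
  have hx := hy.trans hyx
  have hmono : 0 ≤ x ^ γ - y ^ γ := sub_nonneg.2 (Real.rpow_le_rpow hy hyx hγ0)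
  calc ‖x ^ γ • h - y ^ γ • h'‖ = ‖x ^ γ • (h - h') + (x ^ γ - y ^ γ) • h'‖ := by
        congr 1; module
    _ ≤ x ^ γ * ‖h - h'‖ + (x ^ γ - y ^ γ) * ‖h'‖ := by
        refine (norm_add_le _ _).trans ?_
        rw [norm_smul, norm_smul, Real.norm_of_nonneg (Real.rpow_nonneg hx γ),
          Real.norm_of_nonneg hmono]
    _ ≤ x ^ γ * ‖h - h'‖ + (x ^ γ - y ^ γ) * (M * y) := by grw [hh']
    _ = x ^ γ * ‖h - h'‖ + M * ((x ^ γ - y ^ γ) * y) := by ring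
    _ ≤ x ^ γ * ‖h - h'‖ + M * ((x - y) * y ^ γ) := by
        grw [rpow_sub_rpow_mul_le hγ1 hy hyx]
    _ = x ^ γ * ‖h - h'‖ + M * (x - y) * y ^ γ := by ring

lemma two_rpow_le_two_pow {q : ℝ} {n : ℕ} (hq : q ≤ n) : (2 : ℝ) ^ q ≤ 2 ^ n := by
  simpa using Real.rpow_le_rpow_of_exponent_le one_le_two hq

end Scalar

section Kernels

variable {γ : ℝ}

lemma norm_bvec (hγ : 0 ≤ γ) (v : E3) : ‖bvec γ v‖ = 2 * ‖v‖ ^ (1 + γ) := by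
  rw [bvec, norm_smul, Real.rpow_one_add' (norm_nonneg v) (by linarith), norm_mul,
    Real.norm_of_nonneg (Real.rpow_nonneg (norm_nonneg v) γ), norm_neg, Real.norm_two]
  ring

lemma norm_bvec_sub_le (hγ0 : 0 ≤ γ) (hγ1 : γ ≤ 1) (u u' : E3) :
    ‖bvec γ u - bvec γ u'‖ ≤ 2 * ‖u - u'‖ * (‖u‖ ^ γ + ‖u'‖ ^ γ) := by
  wlog h : ‖u'‖ ≤ ‖u‖ generalizing u u'
  · simpa only [norm_sub_rev, add_comm] using this u' u (le_of_not_ge h)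
  have hsub : bvec γ u - bvec γ u' = (-2 : ℝ) • (‖u‖ ^ γ • u - ‖u'‖ ^ γ • u') := by
    simp only [bvec]; module
  have hlip := norm_rpow_smul_sub_rpow_smul_le_s4 hγ0 hγ1 (norm_nonneg u') h zero_le_one u u'
    (one_mul _).ge
  rw [hsub, norm_smul, norm_neg, Real.norm_two]
  calc 2 * ‖‖u‖ ^ γ • u - ‖u'‖ ^ γ • u'‖
      ≤ 2 * (‖u‖ ^ γ * ‖u - u'‖ + 1 * (‖u‖ - ‖u'‖) * ‖u'‖ ^ γ) := by grw [hlip]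
    _ ≤ 2 * (‖u‖ ^ γ * ‖u - u'‖ + 1 * ‖u - u'‖ * ‖u'‖ ^ γ) := by grw [norm_sub_norm_le u u']
    _ = 2 * ‖u - u'‖ * (‖u‖ ^ γ + ‖u'‖ ^ γ) := by ring

def sqNormProj (v : E3) : M3 :=
  ‖v‖ ^ 2 • (1 : M3) - vecMulVec (fun i => v i) (fun i => v i)

lemma amat_eq_rpow_smul (v : E3) : amat γ v = ‖v‖ ^ γ • sqNormProj v := by
  rcases eq_or_ne v 0 with rfl | hv
  · ext i j
    simp [amat, sqNormProj, vecMulVec_apply]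
  have hv' : 0 < ‖v‖ := norm_pos_iff.2 hv
  rw [amat, if_neg hv, proj3, sqNormProj, Real.rpow_add hv', Real.rpow_two, mul_comm, mul_smul,
    smul_sub, smul_smul, mul_inv_cancel₀ (by positivity), one_smul]

lemma sqNormProj_apply (v : E3) (i j : Fin 3) :
    sqNormProj v i j = ‖v‖ ^ 2 * (1 : M3) i j - v i * v j := by
  simp [sqNormProj, vecMulVec_apply]

lemma abs_sqNormProj_apply_le (v : E3) (i j : Fin 3) : |sqNormProj v i j| ≤ 2 * ‖v‖ ^ 2 := by
  have hi := PiLp.norm_apply_le v i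
  have hj := PiLp.norm_apply_le v j
  have hδ : |(1 : M3) i j| ≤ 1 := by
    rw [one_apply]; split_ifs <;> simp
  rw [sqNormProj_apply]
  calc |‖v‖ ^ 2 * (1 : M3) i j - v i * v j|
      ≤ ‖v‖ ^ 2 * |(1 : M3) i j| + |v i| * |v j| := by
        grw [abs_sub, abs_mul, abs_mul, abs_of_nonneg (sq_nonneg ‖v‖)]
    _ ≤ ‖v‖ ^ 2 * 1 + ‖v‖ * ‖v‖ := by
        simp only [Real.norm_eq_abs] at hi hj
        grw [hδ, hi, hj]
    _ = 2 * ‖v‖ ^ 2 := by ring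

lemma abs_sqNormProj_apply_sub_le (u u' : E3) (i j : Fin 3) :
    |sqNormProj u i j - sqNormProj u' i j| ≤ 2 * ‖u - u'‖ * (‖u‖ + ‖u'‖) := by
  have hi := PiLp.norm_apply_le u i
  have hj' := PiLp.norm_apply_le u' j
  have hdi := PiLp.norm_apply_le (u - u') i
  have hdj := PiLp.norm_apply_le (u - u') j
  have hδ : |(1 : M3) i j| ≤ 1 := by
    rw [one_apply]; split_ifs <;> simp
  have hnorm : |‖u‖ - ‖u'‖| ≤ ‖u - u'‖ := abs_norm_sub_norm_le u u'
  simp only [Real.norm_eq_abs, PiLp.sub_apply] at hi hj' hdi hdj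
  rw [sqNormProj_apply, sqNormProj_apply]
  calc |‖u‖ ^ 2 * (1 : M3) i j - u i * u j - (‖u'‖ ^ 2 * (1 : M3) i j - u' i * u' j)|
      = |(‖u‖ - ‖u'‖) * (‖u‖ + ‖u'‖) * (1 : M3) i j
          - (u i * (u j - u' j) + (u i - u' i) * u' j)| := by ring_nf
    _ ≤ |‖u‖ - ‖u'‖| * (‖u‖ + ‖u'‖) * |(1 : M3) i j|
          + (|u i| * |u j - u' j| + |u i - u' i| * |u' j|) := by
        grw [abs_sub, abs_add_le, abs_mul, abs_mul, abs_mul, abs_mul,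
          abs_of_nonneg (by positivity : 0 ≤ ‖u‖ + ‖u'‖)]
    _ ≤ ‖u - u'‖ * (‖u‖ + ‖u'‖) * 1 + (‖u‖ * ‖u - u'‖ + ‖u - u'‖ * ‖u'‖) := by
        grw [hnorm, hδ, hi, hj', hdi, hdj]
    _ = 2 * ‖u - u'‖ * (‖u‖ + ‖u'‖) := by ring

lemma amat_apply (v : E3) (i j : Fin 3) : amat γ v i j = ‖v‖ ^ γ * sqNormProj v i j := by
  rw [amat_eq_rpow_smul, Matrix.smul_apply, smul_eq_mul]

lemma abs_amat_apply_le (hγ : 0 ≤ γ) (v : E3) (i j : Fin 3) :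
    |amat γ v i j| ≤ 2 * ‖v‖ ^ (2 + γ) := by
  rw [amat_apply, abs_mul, abs_of_nonneg (Real.rpow_nonneg (norm_nonneg v) γ),
    Real.rpow_add' (norm_nonneg v) (by positivity), Real.rpow_two]
  grw [abs_sqNormProj_apply_le]
  exact le_of_eq (by ring)

lemma abs_amat_apply_sub_le (hγ0 : 0 ≤ γ) (hγ1 : γ ≤ 1) (u u' : E3) (i j : Fin 3) :
    |amat γ u i j - amat γ u' i j| ≤ 4 * ‖u - u'‖ * (‖u‖ ^ (1 + γ) + ‖u'‖ ^ (1 + γ)) := by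
  wlog h : ‖u'‖ ≤ ‖u‖ generalizing u u'
  · simpa only [abs_sub_comm, norm_sub_rev, add_comm] using this u' u (le_of_not_ge h)
  set x := ‖u‖
  set y := ‖u'‖
  set d := ‖u - u'‖
  have hy : 0 ≤ y := norm_nonneg u'
  have hlip := norm_rpow_smul_sub_rpow_smul_le_s4 hγ0 hγ1 hy h (by positivity : 0 ≤ 2 * y)
    (sqNormProj u i j) (sqNormProj u' i j)
    (by simpa [sq, mul_assoc] using abs_sqNormProj_apply_le u' i j)
  simp only [smul_eq_mul, Real.norm_eq_abs] at hlip
  rw [amat_apply, amat_apply]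
  have hxx : x ^ γ * x = x ^ (1 + γ) := by
    rw [Real.rpow_one_add' (norm_nonneg u) (by linarith), mul_comm]
  have hyy : y * y ^ γ = y ^ (1 + γ) := (Real.rpow_one_add' hy (by linarith)).symm
  calc |x ^ γ * sqNormProj u i j - y ^ γ * sqNormProj u' i j|
      ≤ x ^ γ * (2 * d * (x + y)) + 2 * y * d * y ^ γ := by
        grw [hlip, abs_sqNormProj_apply_sub_le, norm_sub_norm_le u u']
    _ = 2 * d * (x ^ γ * x + x ^ γ * y) + 2 * d * (y * y ^ γ) := by ring
    _ ≤ 2 * d * (x ^ γ * x + x ^ γ * x) + 2 * d * (y * y ^ γ) := by gcongr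
    _ ≤ 4 * d * (x ^ (1 + γ) + y ^ (1 + γ)) := by
        rw [hxx, hyy]
        have : 0 ≤ d * y ^ (1 + γ) := by positivity
        linarith

lemma continuous_bvec (hγ : 0 ≤ γ) : Continuous (bvec γ) := by
  unfold bvec
  fun_prop (disch := assumption)

lemma continuous_amat_apply (hγ : 0 ≤ γ) (i j : Fin 3) : Continuous fun v : E3 => amat γ v i j := by
  simp only [amat_apply, sqNormProj_apply]
  fun_prop (disch := assumption)

end Kernels

lemma frobNorm_le_of_forall_abs_le {A : M3} {M : ℝ} (hA : ∀ i j, |A i j| ≤ M) :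
    frobNorm A ≤ 3 * M := by
  have hM : 0 ≤ M := (abs_nonneg _).trans (hA 0 0)
  have hsq (i j : Fin 3) : A i j ^ 2 ≤ M ^ 2 := sq_le_sq.2 ((hA i j).trans (le_abs_self M))
  rw [frobNorm, Real.sqrt_le_left (by positivity), frobSq]
  calc trace (A * Aᵀ) = ∑ i, ∑ j, A i j ^ 2 := by
        simp [trace, mul_apply, sq]
    _ ≤ ∑ _i : Fin 3, ∑ _j : Fin 3, M ^ 2 :=
        Finset.sum_le_sum fun i _ => Finset.sum_le_sum fun j _ => hsq i j
    _ = (3 * M) ^ 2 := by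
        simp only [Finset.sum_const, Finset.card_univ, Fintype.card_fin, nsmul_eq_mul]
        ring

lemma norm_comp_sub_le {E F : Type*} [SeminormedAddCommGroup E] [SeminormedAddCommGroup F]
    {K : E → F} {c q : ℝ} (hc : 0 ≤ c) (hq : 0 ≤ q) (hKle : ∀ z, ‖K z‖ ≤ c * ‖z‖ ^ q) (v u : E) :
    ‖K (v - u)‖ ≤ 2 ^ q * c * ‖v‖ ^ q + 2 ^ q * c * ‖u‖ ^ q := by
  grw [hKle, norm_sub_rpow_le hq]
  exact le_of_eq (by ring)

section Integrals

variable {F : Type*} [NormedAddCommGroup F] {f : Measure E3}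

lemma mom_nonneg (q : ℝ) (f : Measure E3) : 0 ≤ mom q f :=
  integral_nonneg fun v => Real.rpow_nonneg (norm_nonneg v) q

lemma integrable_norm_rpow_of_le [IsFiniteMeasure f] {p q : ℝ}
    (hp : Integrable (fun v : E3 => ‖v‖ ^ p) f) (hq : 0 ≤ q) (hqp : q ≤ p) :
    Integrable (fun v : E3 => ‖v‖ ^ q) f := by
  refine ((integrable_const 1).add hp).mono' (by fun_prop (disch := assumption))
    (ae_of_all _ fun v => ?_)
  rw [Real.norm_of_nonneg (Real.rpow_nonneg (norm_nonneg v) q), Pi.add_apply]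
  rcases le_total ‖v‖ 1 with h | h
  · linarith [Real.rpow_le_one (norm_nonneg v) h hq, Real.rpow_nonneg (norm_nonneg v) p]
  · linarith [Real.rpow_le_rpow_of_exponent_le h hqp]

lemma norm_integral_le_add_mul_mom [NormedSpace ℝ F] [IsProbabilityMeasure f] {g : E3 → F}
    {A B q : ℝ}
    (hq : Integrable (fun v : E3 => ‖v‖ ^ q) f) (hg : ∀ u, ‖g u‖ ≤ A + B * ‖u‖ ^ q) :
    ‖∫ u, g u ∂f‖ ≤ A + B * mom q f := by
  refine (norm_integral_le_of_norm_le ((integrable_const A).add (hq.const_mul B))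
    (ae_of_all _ hg)).trans_eq ?_
  simp only [Pi.add_apply]
  rw [integral_add (integrable_const A) (hq.const_mul B), integral_const, integral_const_mul]
  simp [mom]

lemma integrable_comp_sub [IsFiniteMeasure f] {K : E3 → F} {c q : ℝ} (hK : Continuous K)
    (hc : 0 ≤ c) (hq : 0 ≤ q) (hmom : Integrable (fun v : E3 => ‖v‖ ^ q) f)
    (hKle : ∀ z, ‖K z‖ ≤ c * ‖z‖ ^ q) (v : E3) :
    Integrable (fun u => K (v - u)) f :=
  ((integrable_const _).add (hmom.const_mul _)).mono' (by fun_prop)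
    (ae_of_all _ (norm_comp_sub_le hc hq hKle v))

lemma norm_integral_comp_sub_le [NormedSpace ℝ F] [IsProbabilityMeasure f] {K : E3 → F}
    {c q : ℝ} (hc : 0 ≤ c) (hq : 0 ≤ q) (hmom : Integrable (fun v : E3 => ‖v‖ ^ q) f)
    (hKle : ∀ z, ‖K z‖ ≤ c * ‖z‖ ^ q) (v : E3) :
    ‖∫ u, K (v - u) ∂f‖ ≤ 2 ^ q * c * (‖v‖ ^ q + mom q f) :=
  (norm_integral_le_add_mul_mom hmom (norm_comp_sub_le hc hq hKle v)).trans_eq (by ring)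

lemma norm_integral_comp_sub_sub_le [NormedSpace ℝ F] [IsProbabilityMeasure f] {K : E3 → F}
    {c p : ℝ} (hc : 0 ≤ c) (hp : 0 ≤ p) (hmom : Integrable (fun v : E3 => ‖v‖ ^ p) f)
    (hint : ∀ z, Integrable (fun u => K (z - u)) f)
    (hKlip : ∀ z z', ‖K z - K z'‖ ≤ c * ‖z - z'‖ * (‖z‖ ^ p + ‖z'‖ ^ p)) (v w : E3) :
    ‖∫ u, K (v - u) ∂f - ∫ u, K (w - u) ∂f‖
      ≤ 2 * 2 ^ p * c * ‖v - w‖ * (‖v‖ ^ p + ‖w‖ ^ p + mom p f) := by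
  rw [← integral_sub (hint v) (hint w)]
  have hpointwise (u : E3) : ‖K (v - u) - K (w - u)‖
      ≤ 2 ^ p * c * ‖v - w‖ * (‖v‖ ^ p + ‖w‖ ^ p) + 2 * 2 ^ p * c * ‖v - w‖ * ‖u‖ ^ p := by
    grw [hKlip, sub_sub_sub_cancel_right, norm_sub_rpow_le hp v, norm_sub_rpow_le hp w]
    exact le_of_eq (by ring)
  refine (norm_integral_le_add_mul_mom hmom hpointwise).trans ?_
  have : 0 ≤ 2 ^ p * c * ‖v - w‖ * (‖v‖ ^ p + ‖w‖ ^ p) := by positivity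
  linarith

end Integrals

section MeanFieldCoefficients

variable {γ : ℝ} {f : Measure E3} [IsProbabilityMeasure f]

lemma norm_bInt_le (hγ0 : 0 ≤ γ) (hγ1 : γ ≤ 1)
    (hmom : Integrable (fun v : E3 => ‖v‖ ^ (1 + γ)) f) (v : E3) :
    ‖bInt γ f v‖ ≤ 8 * (‖v‖ ^ (1 + γ) + mom (1 + γ) f) := by
  refine (norm_integral_comp_sub_le zero_le_two (by linarith) hmom
    (fun z => (norm_bvec hγ0 z).le) v).trans ?_
  have h2 : (2 : ℝ) ^ (1 + γ) ≤ 2 ^ 2 := two_rpow_le_two_pow (by push_cast; linarith)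
  gcongr
  · exact add_nonneg (by positivity) (mom_nonneg _ _)
  · linarith

lemma norm_bInt_sub_le (hγ0 : 0 ≤ γ) (hγ1 : γ ≤ 1)
    (hmom : Integrable (fun v : E3 => ‖v‖ ^ (1 + γ)) f) (v w : E3) :
    ‖bInt γ f v - bInt γ f w‖ ≤ 8 * ‖v - w‖ * (‖v‖ ^ γ + ‖w‖ ^ γ + mom γ f) := by
  have hint := integrable_comp_sub (continuous_bvec hγ0) zero_le_two (by linarith) hmom
    (fun z => (norm_bvec hγ0 z).le)
  refine (norm_integral_comp_sub_sub_le zero_le_two hγ0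
    (integrable_norm_rpow_of_le hmom hγ0 (by linarith)) hint
    (norm_bvec_sub_le hγ0 hγ1) v w).trans ?_
  have h2 : (2 : ℝ) ^ γ ≤ 2 ^ 1 := two_rpow_le_two_pow (by push_cast; linarith)
  gcongr
  · exact add_nonneg (by positivity) (mom_nonneg _ _)
  · linarith

lemma frobNorm_aInt_le (hγ0 : 0 ≤ γ) (hγ1 : γ ≤ 1)
    (hmom : Integrable (fun v : E3 => ‖v‖ ^ (2 + γ)) f) (v : E3) :
    frobNorm (aInt γ f v) ≤ 48 * (‖v‖ ^ (2 + γ) + mom (2 + γ) f) := by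
  refine (frobNorm_le_of_forall_abs_le fun i j =>
    norm_integral_comp_sub_le (K := fun z => amat γ z i j) zero_le_two (by linarith) hmom
      (fun z => abs_amat_apply_le hγ0 z i j) v).trans ?_
  have h2 : (2 : ℝ) ^ (2 + γ) ≤ 2 ^ 3 := two_rpow_le_two_pow (by push_cast; linarith)
  have hX : 0 ≤ ‖v‖ ^ (2 + γ) + mom (2 + γ) f := add_nonneg (by positivity) (mom_nonneg _ _)
  nlinarith

lemma frobNorm_aInt_sub_le (hγ0 : 0 ≤ γ) (hγ1 : γ ≤ 1)
    (hmom : Integrable (fun v : E3 => ‖v‖ ^ (2 + γ)) f) (v w : E3) :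
    frobNorm (aInt γ f v - aInt γ f w)
      ≤ 96 * ‖v - w‖ * (‖v‖ ^ (1 + γ) + ‖w‖ ^ (1 + γ) + mom (1 + γ) f) := by
  have hint (i j : Fin 3) := integrable_comp_sub (continuous_amat_apply hγ0 i j) zero_le_two
    (by linarith) hmom (fun z => abs_amat_apply_le hγ0 z i j)
  refine (frobNorm_le_of_forall_abs_le fun i j =>
    norm_integral_comp_sub_sub_le (K := fun z => amat γ z i j) zero_le_four (by linarith)
      (integrable_norm_rpow_of_le hmom (by linarith) (by linarith)) (hint i j)
      (fun z z' => abs_amat_apply_sub_le hγ0 hγ1 z z' i j) v w).trans ?_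
  have h2 : (2 : ℝ) ^ (1 + γ) ≤ 2 ^ 2 := two_rpow_le_two_pow (by push_cast; linarith)
  have hX : 0 ≤ ‖v - w‖ * (‖v‖ ^ (1 + γ) + ‖w‖ ^ (1 + γ) + mom (1 + γ) f) :=
    mul_nonneg (norm_nonneg _) (add_nonneg (by positivity) (mom_nonneg _ _))
  nlinarith

end MeanFieldCoefficients

theorem mean_field_coefficients_bounds (γ : ℝ) (hγ : γ ∈ Set.Icc (0:ℝ) 1) :
    ∃ C : ℝ, 0 < C ∧ ∀ (f : Measure E3), IsProbabilityMeasure f →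
      Integrable (fun v : E3 => ‖v‖ ^ (2 + γ)) f →
      ∀ v w : E3,
        ‖bInt γ f v‖ ≤ C * (‖v‖ ^ (1 + γ) + mom (1 + γ) f) ∧
        ‖bInt γ f v - bInt γ f w‖ ≤ C * ‖v - w‖ * (‖v‖ ^ γ + ‖w‖ ^ γ + mom γ f) ∧
        frobNorm (aInt γ f v) ≤ C * (‖v‖ ^ (2 + γ) + mom (2 + γ) f) ∧
        frobNorm (aInt γ f v - aInt γ f w)
          ≤ C * ‖v - w‖ * (‖v‖ ^ (1 + γ) + ‖w‖ ^ (1 + γ) + mom (1 + γ) f) := by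
  obtain ⟨hγ0, hγ1⟩ := hγ
  refine ⟨96, by norm_num, fun f _ hmom v w => ?_⟩
  have hmom' := integrable_norm_rpow_of_le hmom (by linarith) (by linarith : 1 + γ ≤ 2 + γ)
  have hX (q : ℝ) : 0 ≤ ‖v‖ ^ q + mom q f := add_nonneg (by positivity) (mom_nonneg q f)
  refine ⟨?_, ?_, (frobNorm_aInt_le hγ0 hγ1 hmom v).trans ?_,
    frobNorm_aInt_sub_le hγ0 hγ1 hmom v w⟩
  · exact (norm_bInt_le hγ0 hγ1 hmom' v).trans (mul_le_mul_of_nonneg_right (by norm_num) (hX _))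
  · refine (norm_bInt_sub_le hγ0 hγ1 hmom' v w).trans (mul_le_mul_of_nonneg_right ?_ ?_)
    · exact mul_le_mul_of_nonneg_right (by norm_num) (norm_nonneg _)
    · exact add_nonneg (by positivity) (mom_nonneg γ f)
  · exact mul_le_mul_of_nonneg_right (by norm_num) (hX _)
end
end
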